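/- Relative entropy identity for hyperbolic systems (smooth solutions): Let u and ū be C¹ solutions of the hyperbolic system ∂_t A(u) + Σ_α ∂_{x_α} F_α(u) = 0 on an open subset of ℝ⁺ × ℝ^d, under hypotheses (H1) and (H2), each satisfying the entropy identity ∂_t η + Σ_α ∂_{x_α} q_α = 0. Then the following identity holds pointwise: ∂_t η(u|ū) + Σ_α ∂_{x_α} q_α(u|ū) = − Σ_α ∂_{x_α}(G(ū)) · F_α(u|ū). -/

import Mathlib

/-!
By (H2), the derivative of `η(u|ū)` in a direction `v` is
`⟪G(u) - G(ū), ∇A(u) ∂ᵥu⟫ - ⟪∇G(ū) ∂ᵥū, A(u) - A(ū)⟫`, and likewise for `q_α(u|ū)` with `F_α`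
in place of `A`. Summing the time derivative and the `α`-th space derivatives, the first terms add
up to `⟪G(u) - G(ū), ∂ₜA(u) + Σ_α ∂_α F_α(u)⟫ = 0`. Differentiating (H2) once more, the symmetry
of second derivatives makes `∇Gᵀ∇A` and `∇Gᵀ∇F_α` symmetric; with the equation for `ū` this gives
`⟪∂ₜG(ū), ∇A(ū) r⟫ = -Σ_α ⟪∂_α G(ū), ∇F_α(ū) r⟫` for every `r`, which is used with
`r = ∇A(ū)⁻¹ (A(u) - A(ū))`.
-/

open scoped RealInnerProductSpace

theorem inner_apply_eq_neg_sum_of_balance {E F ι : Type*} [NormedAddCommGroup F]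
    [InnerProductSpace ℝ F] [Fintype ι] {L M : E → F} {N : ι → E → F}
    (hM : ∀ ζ ξ, ⟪L ζ, M ξ⟫ = ⟪L ξ, M ζ⟫) (hN : ∀ i ζ ξ, ⟪L ζ, N i ξ⟫ = ⟪L ξ, N i ζ⟫)
    {τ : E} {σ : ι → E} (hbal : M τ + ∑ i, N i (σ i) = 0) (r : E) :
    ⟪L τ, M r⟫ = -∑ i, ⟪L (σ i), N i r⟫ := by
  calc ⟪L τ, M r⟫ = ⟪L r, M τ⟫ := hM τ r
    _ = -∑ i, ⟪L r, N i (σ i)⟫ := by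
      rw [eq_neg_of_add_eq_zero_left hbal, inner_neg_right, inner_sum]
    _ = -∑ i, ⟪L (σ i), N i r⟫ := by simp only [hN _ r]

theorem ContinuousLinearMap.apply_ringInverse_apply_of_bijective {E : Type*}
    [NormedAddCommGroup E] [NormedSpace ℝ E] [CompleteSpace E] {M : E →L[ℝ] E}
    (hM : Function.Bijective M) (w : E) : M (Ring.inverse M w) = w := by
  simpa using congr($(Ring.mul_inverse_cancel M (isUnit_iff_bijective.mpr hM)) w)

theorem DifferentiableAt.slices {E X Y : Type*} [NormedAddCommGroup E] [NormedSpace ℝ E]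
    [NormedAddCommGroup X] [NormedSpace ℝ X] [NormedAddCommGroup Y] [NormedSpace ℝ Y]
    {u : X → Y → E} {x : X} {y : Y}
    (hu : DifferentiableAt ℝ (fun p : X × Y => u p.1 p.2) (x, y)) :
    DifferentiableAt ℝ (fun x' => u x' y) x ∧ DifferentiableAt ℝ (u x) y := by
  have hx : DifferentiableAt ℝ (fun x' : X => (x', y)) x :=
    differentiableAt_id.prodMk (differentiableAt_const y)
  have hy : DifferentiableAt ℝ (fun y' : Y => (x, y')) y :=
    (differentiableAt_const x).prodMk differentiableAt_id
  exact ⟨(hu.comp x hx :), (hu.comp y hy :)⟩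

theorem deriv_comp_add_sum_fderiv_comp {E F X ι : Type*} [NormedAddCommGroup E]
    [NormedSpace ℝ E] [NormedAddCommGroup F] [NormedSpace ℝ F] [NormedAddCommGroup X]
    [NormedSpace ℝ X] [Fintype ι] {A : E → F} {Φ : ι → E → F} {u : ℝ → X → E} {t : ℝ} {x : X}
    (hA : DifferentiableAt ℝ A (u t x)) (hΦ : ∀ i, DifferentiableAt ℝ (Φ i) (u t x))
    (hut : DifferentiableAt ℝ (fun s => u s x) t) (hux : DifferentiableAt ℝ (u t) x)
    (v : ι → X) :
    deriv (fun s => A (u s x)) t + ∑ i, fderiv ℝ (fun y => Φ i (u t y)) x (v i)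
      = fderiv ℝ A (u t x) (deriv (fun s => u s x) t)
        + ∑ i, fderiv ℝ (Φ i) (u t x) (fderiv ℝ (u t) x (v i)) := by
  have ht : deriv (fun s => A (u s x)) t = _ :=
    (hA.hasFDerivAt.comp_hasDerivAt t hut.hasDerivAt).deriv
  simp only [ht, fderiv_fun_comp _ (hΦ _) hux, ContinuousLinearMap.comp_apply]

section RelativeEntropy

variable {E F X : Type*} [NormedAddCommGroup E] [NormedSpace ℝ E]
  [NormedAddCommGroup F] [InnerProductSpace ℝ F] [NormedAddCommGroup X] [NormedSpace ℝ X]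

theorem fderiv_fderiv_apply_of_fderiv_eq_inner {f : E → ℝ} {Φ G : E → F} {x : E}
    (hf : DifferentiableAt ℝ (fderiv ℝ f) x) (hΦ : DifferentiableAt ℝ (fderiv ℝ Φ) x)
    (hG : DifferentiableAt ℝ G x) (h : ∀ w ξ, fderiv ℝ f w ξ = ⟪G w, fderiv ℝ Φ w ξ⟫)
    (ζ ξ : E) :
    fderiv ℝ (fderiv ℝ f) x ζ ξ
      = ⟪G x, fderiv ℝ (fderiv ℝ Φ) x ζ ξ⟫ + ⟪fderiv ℝ G x ζ, fderiv ℝ Φ x ξ⟫ := by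
  have hlhs := (ContinuousLinearMap.apply ℝ ℝ ξ).hasFDerivAt.comp x hf.hasFDerivAt
  have hrhs := hG.hasFDerivAt.inner ℝ
    ((ContinuousLinearMap.apply ℝ F ξ).hasFDerivAt.comp x hΦ.hasFDerivAt)
  simp only [Function.comp_def, ContinuousLinearMap.apply_apply, h] at hlhs hrhs
  simpa [fderivInnerCLM_apply] using congr($(hlhs.unique hrhs) ζ)

theorem inner_fderiv_comm_of_fderiv_eq_inner {f : E → ℝ} {Φ G : E → F} {x : E}
    (hf : ContDiffAt ℝ 2 f x) (hΦ : ContDiffAt ℝ 2 Φ x) (hG : DifferentiableAt ℝ G x)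
    (h : ∀ w ξ, fderiv ℝ f w ξ = ⟪G w, fderiv ℝ Φ w ξ⟫) (ζ ξ : E) :
    ⟪fderiv ℝ G x ζ, fderiv ℝ Φ x ξ⟫ = ⟪fderiv ℝ G x ξ, fderiv ℝ Φ x ζ⟫ := by
  have hf' := (hf.fderiv_right (m := 1) le_rfl).differentiableAt one_ne_zero
  have hΦ' := (hΦ.fderiv_right (m := 1) le_rfl).differentiableAt one_ne_zero
  have hζξ := fderiv_fderiv_apply_of_fderiv_eq_inner hf' hΦ' hG h ζ ξ
  have hξζ := fderiv_fderiv_apply_of_fderiv_eq_inner hf' hΦ' hG h ξ ζ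
  rw [hf.isSymmSndFDerivAt (by simp) ζ ξ, hΦ.isSymmSndFDerivAt (by simp) ζ ξ] at hζξ
  linarith

/-- `η(u|ū) = relEntropy η A G u ū` and `q_α(u|ū) = relEntropy q_α F_α G u ū`. -/
noncomputable def relEntropy (f : E → ℝ) (Φ G : E → F) (a b : E) : ℝ :=
  f a - f b - ⟪G b, Φ a - Φ b⟫

theorem fderiv_relEntropy_comp_apply {f : E → ℝ} {Φ G : E → F} {γ₁ γ₂ : X → E} {x : X}
    (hf : Differentiable ℝ f) (hΦ : Differentiable ℝ Φ) (hG : Differentiable ℝ G)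
    (h : ∀ w ξ, fderiv ℝ f w ξ = ⟪G w, fderiv ℝ Φ w ξ⟫)
    (hγ₁ : DifferentiableAt ℝ γ₁ x) (hγ₂ : DifferentiableAt ℝ γ₂ x) (v : X) :
    fderiv ℝ (fun y => relEntropy f Φ G (γ₁ y) (γ₂ y)) x v
      = ⟪G (γ₁ x) - G (γ₂ x), fderiv ℝ Φ (γ₁ x) (fderiv ℝ γ₁ x v)⟫
        - ⟪fderiv ℝ G (γ₂ x) (fderiv ℝ γ₂ x v), Φ (γ₁ x) - Φ (γ₂ x)⟫ := by
  have hf₁ := (hf _).hasFDerivAt.comp x hγ₁.hasFDerivAt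
  have hf₂ := (hf _).hasFDerivAt.comp x hγ₂.hasFDerivAt
  have hΦ₁ := (hΦ _).hasFDerivAt.comp x hγ₁.hasFDerivAt
  have hΦ₂ := (hΦ _).hasFDerivAt.comp x hγ₂.hasFDerivAt
  have hG₂ := (hG _).hasFDerivAt.comp x hγ₂.hasFDerivAt
  have hrel : HasFDerivAt (fun y => relEntropy f Φ G (γ₁ y) (γ₂ y)) _ x :=
    (hf₁.sub hf₂).sub (hG₂.inner ℝ (hΦ₁.sub hΦ₂))
  rw [hrel.fderiv]
  simp only [sub_apply, ContinuousLinearMap.comp_apply,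
    ContinuousLinearMap.prod_apply, Function.comp_apply, fderivInnerCLM_apply, h,
    inner_sub_left, inner_sub_right]
  ring

theorem deriv_relEntropy_comp {f : E → ℝ} {Φ G : E → F} {γ₁ γ₂ : ℝ → E} {t : ℝ}
    (hf : Differentiable ℝ f) (hΦ : Differentiable ℝ Φ) (hG : Differentiable ℝ G)
    (h : ∀ w ξ, fderiv ℝ f w ξ = ⟪G w, fderiv ℝ Φ w ξ⟫)
    (hγ₁ : DifferentiableAt ℝ γ₁ t) (hγ₂ : DifferentiableAt ℝ γ₂ t) :
    deriv (fun s => relEntropy f Φ G (γ₁ s) (γ₂ s)) t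
      = ⟪G (γ₁ t) - G (γ₂ t), fderiv ℝ Φ (γ₁ t) (deriv γ₁ t)⟫
        - ⟪fderiv ℝ G (γ₂ t) (deriv γ₂ t), Φ (γ₁ t) - Φ (γ₂ t)⟫ := by
  simpa only [fderiv_apply_one_eq_deriv] using fderiv_relEntropy_comp_apply hf hΦ hG h hγ₁ hγ₂ 1

end RelativeEntropy

theorem relative_entropy_identity_hyperbolic_general
    (n d : ℕ)
    (A : EuclideanSpace ℝ (Fin n) → EuclideanSpace ℝ (Fin n))
    (F : Fin d → EuclideanSpace ℝ (Fin n) → EuclideanSpace ℝ (Fin n))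
    (η : EuclideanSpace ℝ (Fin n) → ℝ)
    (q : Fin d → EuclideanSpace ℝ (Fin n) → ℝ)
    (G : EuclideanSpace ℝ (Fin n) → EuclideanSpace ℝ (Fin n))
    -- smoothness of the constitutive functions
    (hAreg : ContDiff ℝ 2 A) (hFreg : ∀ α, ContDiff ℝ (⊤ : ℕ∞) (F α))
    (hηreg : ContDiff ℝ (⊤ : ℕ∞) η) (hqreg : ∀ α, ContDiff ℝ (⊤ : ℕ∞) (q α))
    (hGreg : ContDiff ℝ (⊤ : ℕ∞) G)
    -- (H1)
    (hH1' : ∀ w, Function.Bijective (fderiv ℝ A w))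
    -- (H2)
    (hH2η : ∀ w ξ, fderiv ℝ η w ξ = ⟪G w, fderiv ℝ A w ξ⟫)
    (hH2q : ∀ α w ξ, fderiv ℝ (q α) w ξ = ⟪G w, fderiv ℝ (F α) w ξ⟫)
    -- the open domain, contained in ℝ⁺ × ℝ^d
    (Ω : Set (ℝ × (Fin d → ℝ))) (hΩ : IsOpen Ω)
    -- the two C¹ solutions
    (u ubar : ℝ → (Fin d → ℝ) → EuclideanSpace ℝ (Fin n))
    (hureg : ContDiffOn ℝ 1 (fun pz : ℝ × (Fin d → ℝ) => u pz.1 pz.2) Ω)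
    (hubarreg : ContDiffOn ℝ 1 (fun pz : ℝ × (Fin d → ℝ) => ubar pz.1 pz.2) Ω)
    (hupde : ∀ pz ∈ Ω,
      deriv (fun s => A (u s pz.2)) pz.1
        + ∑ α, fderiv ℝ (fun y => F α (u pz.1 y)) pz.2 (Pi.single α 1) = 0)
    (hubarpde : ∀ pz ∈ Ω,
      deriv (fun s => A (ubar s pz.2)) pz.1
        + ∑ α, fderiv ℝ (fun y => F α (ubar pz.1 y)) pz.2 (Pi.single α 1) = 0) :
    ∀ pz ∈ Ω,
      deriv (fun s => η (u s pz.2) - η (ubar s pz.2)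
          - ⟪G (ubar s pz.2), A (u s pz.2) - A (ubar s pz.2)⟫) pz.1
        + ∑ α, fderiv ℝ (fun y => q α (u pz.1 y) - q α (ubar pz.1 y)
            - ⟪G (ubar pz.1 y), F α (u pz.1 y) - F α (ubar pz.1 y)⟫) pz.2 (Pi.single α 1)
      = - ∑ α, ⟪fderiv ℝ (fun y => G (ubar pz.1 y)) pz.2 (Pi.single α 1),
            F α (u pz.1 pz.2) - F α (ubar pz.1 pz.2)
              - (fderiv ℝ (F α) (ubar pz.1 pz.2))
                  (Ring.inverse (fderiv ℝ A (ubar pz.1 pz.2))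
                    (A (u pz.1 pz.2) - A (ubar pz.1 pz.2)))⟫ := by
  rintro ⟨t, x⟩ hpx
  obtain ⟨hut, hux⟩ := ((hureg.contDiffAt (hΩ.mem_nhds hpx)).differentiableAt one_ne_zero).slices
  obtain ⟨hbt, hbx⟩ :=
    ((hubarreg.contDiffAt (hΩ.mem_nhds hpx)).differentiableAt one_ne_zero).slices
  have hF α : ContDiff ℝ 2 (F α) := (hFreg α).of_le (WithTop.coe_le_coe.mpr le_top)
  have hη : ContDiff ℝ 2 η := hηreg.of_le (WithTop.coe_le_coe.mpr le_top)
  have hq α : ContDiff ℝ 2 (q α) := (hqreg α).of_le (WithTop.coe_le_coe.mpr le_top)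
  have hG : Differentiable ℝ G := hGreg.differentiable (by simp)
  have hAd := hAreg.differentiable two_ne_zero
  have hFd α := (hF α).differentiable two_ne_zero
  have hpde_u := (deriv_comp_add_sum_fderiv_comp (hAd _) (hFd · _) hut hux _).symm.trans
    (hupde _ hpx)
  have hpde_b := (deriv_comp_add_sum_fderiv_comp (hAd _) (hFd · _) hbt hbx _).symm.trans
    (hubarpde _ hpx)
  have hkey := inner_apply_eq_neg_sum_of_balance
    (inner_fderiv_comm_of_fderiv_eq_inner hη.contDiffAt hAreg.contDiffAt (hG _) hH2η)
    (fun α => inner_fderiv_comm_of_fderiv_eq_inner (hq α).contDiffAt (hF α).contDiffAt (hG _)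
      (hH2q α)) hpde_b (Ring.inverse (fderiv ℝ A (ubar t x)) (A (u t x) - A (ubar t x)))
  rw [ContinuousLinearMap.apply_ringInverse_apply_of_bijective (hH1' _)] at hkey
  have hcancel := congr(⟪G (u t x) - G (ubar t x), $hpde_u⟫)
  rw [inner_add_right, inner_sum, inner_zero_right] at hcancel
  have ht := deriv_relEntropy_comp (hη.differentiable two_ne_zero) hAd hG hH2η hut hbt
  have hx α := fderiv_relEntropy_comp_apply ((hq α).differentiable two_ne_zero) (hFd α) hG
    (hH2q α) hux hbx (Pi.single α 1)
  simp only [relEntropy] at ht hx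
  rw [ht, Finset.sum_congr rfl fun α _ => hx α]
  simp only [fderiv_fun_comp _ (hG _) hbx, ContinuousLinearMap.comp_apply, inner_sub_right,
    Finset.sum_sub_distrib] at hkey ⊢
  linarith

/-- **Relative entropy identity for hyperbolic systems (smooth solutions).**
Let `u`, `ū` be C¹ solutions of `∂_t A(u) + Σ_α ∂_{x_α} F_α(u) = 0` on an open set
`Ω ⊆ ℝ⁺ × ℝ^d`, under (H1) and (H2), each satisfying the entropy identity
`∂_t η + Σ_α ∂_{x_α} q_α = 0`.  Then pointwise on `Ω`:
`∂_t η(u|ū) + Σ_α ∂_{x_α} q_α(u|ū) = − Σ_α ∂_{x_α}(G(ū)) · F_α(u|ū)`, where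
`η(u|ū) = η(u) − η(ū) − G(ū)·(A(u) − A(ū))`,
`q_α(u|ū) = q_α(u) − q_α(ū) − G(ū)·(F_α(u) − F_α(ū))`, and
`F_α(u|ū) = F_α(u) − F_α(ū) − ∇F_α(ū) ∇A(ū)⁻¹ (A(u) − A(ū))`. -/
theorem relative_entropy_identity_hyperbolic
    (n d : ℕ)
    (A : EuclideanSpace ℝ (Fin n) → EuclideanSpace ℝ (Fin n))
    (F : Fin d → EuclideanSpace ℝ (Fin n) → EuclideanSpace ℝ (Fin n))
    (η : EuclideanSpace ℝ (Fin n) → ℝ)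
    (q : Fin d → EuclideanSpace ℝ (Fin n) → ℝ)
    (G : EuclideanSpace ℝ (Fin n) → EuclideanSpace ℝ (Fin n))
    -- smoothness of the constitutive functions
    (hAreg : ContDiff ℝ 2 A) (hFreg : ∀ α, ContDiff ℝ (⊤ : ℕ∞) (F α))
    (hηreg : ContDiff ℝ (⊤ : ℕ∞) η) (hqreg : ∀ α, ContDiff ℝ (⊤ : ℕ∞) (q α))
    (hGreg : ContDiff ℝ (⊤ : ℕ∞) G)
    -- (H1)
    (hH1 : Function.Bijective A)
    (hH1' : ∀ w, Function.Bijective (fderiv ℝ A w))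
    -- (H2)
    (hH2η : ∀ w ξ, fderiv ℝ η w ξ = ⟪G w, fderiv ℝ A w ξ⟫)
    (hH2q : ∀ α w ξ, fderiv ℝ (q α) w ξ = ⟪G w, fderiv ℝ (F α) w ξ⟫)
    -- the open domain, contained in ℝ⁺ × ℝ^d
    (Ω : Set (ℝ × (Fin d → ℝ))) (hΩ : IsOpen Ω)
    (hΩpos : ∀ pz ∈ Ω, 0 < pz.1)
    -- the two C¹ solutions
    (u ubar : ℝ → (Fin d → ℝ) → EuclideanSpace ℝ (Fin n))
    (hureg : ContDiffOn ℝ 1 (fun pz : ℝ × (Fin d → ℝ) => u pz.1 pz.2) Ω)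
    (hubarreg : ContDiffOn ℝ 1 (fun pz : ℝ × (Fin d → ℝ) => ubar pz.1 pz.2) Ω)
    (hupde : ∀ pz ∈ Ω,
      deriv (fun s => A (u s pz.2)) pz.1
        + ∑ α, fderiv ℝ (fun y => F α (u pz.1 y)) pz.2 (Pi.single α 1) = 0)
    (hubarpde : ∀ pz ∈ Ω,
      deriv (fun s => A (ubar s pz.2)) pz.1
        + ∑ α, fderiv ℝ (fun y => F α (ubar pz.1 y)) pz.2 (Pi.single α 1) = 0)
    -- entropy identities for both solutions
    (huent : ∀ pz ∈ Ω,
      deriv (fun s => η (u s pz.2)) pz.1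
        + ∑ α, fderiv ℝ (fun y => q α (u pz.1 y)) pz.2 (Pi.single α 1) = 0)
    (hubarent : ∀ pz ∈ Ω,
      deriv (fun s => η (ubar s pz.2)) pz.1
        + ∑ α, fderiv ℝ (fun y => q α (ubar pz.1 y)) pz.2 (Pi.single α 1) = 0) :
    ∀ pz ∈ Ω,
      deriv (fun s => η (u s pz.2) - η (ubar s pz.2)
          - ⟪G (ubar s pz.2), A (u s pz.2) - A (ubar s pz.2)⟫) pz.1
        + ∑ α, fderiv ℝ (fun y => q α (u pz.1 y) - q α (ubar pz.1 y)
            - ⟪G (ubar pz.1 y), F α (u pz.1 y) - F α (ubar pz.1 y)⟫) pz.2 (Pi.single α 1)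
      = - ∑ α, ⟪fderiv ℝ (fun y => G (ubar pz.1 y)) pz.2 (Pi.single α 1),
            F α (u pz.1 pz.2) - F α (ubar pz.1 pz.2)
              - (fderiv ℝ (F α) (ubar pz.1 pz.2))
                  (Ring.inverse (fderiv ℝ A (ubar pz.1 pz.2))
                    (A (u pz.1 pz.2) - A (ubar pz.1 pz.2)))⟫ :=
  relative_entropy_identity_hyperbolic_general n d A F η q G hAreg hFreg hηreg hqreg hGreg hH1' hH2η
    hH2q Ω hΩ u ubar hureg hubarreg hupde hubarpde
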